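/- arXiv:2306.12307 — 9 statements merged into one kernel-verified Lean document; each statement's English description precedes it below -/
import Mathlib

section
/- Let I ⊆ ℝ be an open interval and f : I → ℝ a positive smooth function with |f'(s)| ≤ 1 on I. Set K(s) = -f''(s)/f(s) and assume K(s) ≠ 0 for every s ∈ I and that the Ricci condition K K'' - (K')² - 4K³ + (f'/f) K K' = 0 holds on I. Then there exist constants a, b, c ∈ ℝ such that f(s) f'(s) = a f(s) + b s + c for all s ∈ I. -/
private theorem const_of_hasDerivAt_zero' {I : Set ℝ} (hconv : Convex ℝ I) (hIopen : IsOpen I)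
    {F : ℝ → ℝ} (h : ∀ s ∈ I, HasDerivAt F 0 s) {x y : ℝ} (hx : x ∈ I) (hy : y ∈ I) :
    F x = F y := by
  apply hconv.is_const_of_fderivWithin_eq_zero
    (fun s hs => ((h s hs).differentiableAt).differentiableWithinAt) _ hx hy
  intro s hs
  rw [fderivWithin_of_isOpen hIopen hs]
  have := (h s hs).hasFDerivAt.fderiv
  rw [this]; ext; simp

/-- Let `I ⊆ ℝ` be an open interval and `f : I → ℝ` a positive smooth
function with `|f'(s)| ≤ 1` on `I`. Set `K = -f''/f`, assume `K ≠ 0` on `I` and that the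
Ricci condition `K K'' - (K')² - 4K³ + (f'/f) K K' = 0` holds on `I`. Then there are
constants `a, b, c` with `f f' = a f + b s + c` on `I`. -/
theorem rotational_ricci_reduction_to_first_order_ODE
    (I : Set ℝ) (hIopen : IsOpen I) (hIinterval : I.OrdConnected)
    (f : ℝ → ℝ) (hsmooth : ContDiffOn ℝ (⊤ : ℕ∞) f I)
    (hpos : ∀ s ∈ I, 0 < f s)
    (hslope : ∀ s ∈ I, |deriv f s| ≤ 1)
    (K : ℝ → ℝ) (hK : ∀ s, K s = -(deriv (deriv f) s / f s))
    (hKne : ∀ s ∈ I, K s ≠ 0)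
    (hricci : ∀ s ∈ I,
      K s * deriv (deriv K) s - (deriv K s) ^ 2 - 4 * (K s) ^ 3
        + (deriv f s / f s) * K s * deriv K s = 0) :
    ∃ a b c : ℝ, ∀ s ∈ I, f s * deriv f s = a * f s + b * s + c := by
  rcases Set.eq_empty_or_nonempty I with hI | ⟨s₀, hs₀⟩
  · exact ⟨0, 0, 0, fun s hs => by simp [hI] at hs⟩
  have hconv : Convex ℝ I := convex_iff_ordConnected.mpr hIinterval
  have hfne : ∀ s ∈ I, f s ≠ 0 := fun s hs => (hpos s hs).ne'
  have hKfun : K = fun s => -(deriv (deriv f) s / f s) := funext hK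
  -- smoothness of derivatives
  have hf1 : ContDiffOn ℝ (⊤ : ℕ∞) (deriv f) I := hsmooth.deriv_of_isOpen hIopen (by simp)
  have hf2 : ContDiffOn ℝ (⊤ : ℕ∞) (deriv (deriv f)) I := hf1.deriv_of_isOpen hIopen (by simp)
  have hKc : ContDiffOn ℝ (⊤ : ℕ∞) K I := by
    rw [hKfun]; exact (hf2.div hsmooth hfne).neg
  have hK1c : ContDiffOn ℝ (⊤ : ℕ∞) (deriv K) I := hKc.deriv_of_isOpen hIopen (by simp)
  -- pointwise HasDerivAt facts
  have Hf : ∀ s ∈ I, HasDerivAt f (deriv f s) s := fun s hs =>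
    ((hsmooth.differentiableOn (by simp)).differentiableAt (hIopen.mem_nhds hs)).hasDerivAt
  have Hf1 : ∀ s ∈ I, HasDerivAt (deriv f) (deriv (deriv f) s) s := fun s hs =>
    ((hf1.differentiableOn (by simp)).differentiableAt (hIopen.mem_nhds hs)).hasDerivAt
  have Hf2 : ∀ s ∈ I, HasDerivAt (deriv (deriv f)) (deriv (deriv (deriv f)) s) s := fun s hs =>
    ((hf2.differentiableOn (by simp)).differentiableAt (hIopen.mem_nhds hs)).hasDerivAt
  have HK : ∀ s ∈ I, HasDerivAt K (deriv K s) s := fun s hs =>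
    ((hKc.differentiableOn (by simp)).differentiableAt (hIopen.mem_nhds hs)).hasDerivAt
  have HK1 : ∀ s ∈ I, HasDerivAt (deriv K) (deriv (deriv K) s) s := fun s hs =>
    ((hK1c.differentiableOn (by simp)).differentiableAt (hIopen.mem_nhds hs)).hasDerivAt
  -- f'' = -K f
  have hf2val : ∀ s ∈ I, deriv (deriv f) s = -(K s * f s) := by
    intro s hs
    rw [hK s]
    field_simp [hfne s hs]
  -- formula for K' : K' f² = f'' f' - f''' f
  have hK1f : ∀ s ∈ I, deriv K s * (f s) ^ 2 =
      deriv (deriv f) s * deriv f s - deriv (deriv (deriv f)) s * f s := by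
    intro s hs
    have halt : HasDerivAt K
        (-((deriv (deriv (deriv f)) s * f s - deriv (deriv f) s * deriv f s) / (f s) ^ 2)) s := by
      rw [hKfun]
      exact ((Hf2 s hs).div (Hf s hs) (hfne s hs)).neg
    have huniq := (HK s hs).unique halt
    rw [huniq]
    field_simp [hfne s hs]
    ring
  -- Step 1: G = f K'/K + 4 f' has zero derivative
  set G : ℝ → ℝ := fun t => f t * deriv K t / K t + 4 * deriv f t with hGdef
  have hGderiv : ∀ s ∈ I, HasDerivAt G 0 s := by
    intro s hs
    have h1 : HasDerivAt G
        (((deriv f s * deriv K s + f s * deriv (deriv K) s) * K s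
            - f s * deriv K s * deriv K s) / (K s) ^ 2 + 4 * deriv (deriv f) s) s :=
      (((Hf s hs).mul (HK1 s hs)).div (HK s hs) (hKne s hs)).add ((Hf1 s hs).const_mul 4)
    convert h1 using 1
    have hr := hricci s hs
    have h2 := hf2val s hs
    have hrc : K s * deriv (deriv K) s * f s - (deriv K s) ^ 2 * f s - 4 * (K s) ^ 3 * f s
        + deriv f s * K s * deriv K s = 0 := by
      field_simp [hfne s hs] at hr
      linear_combination hr
    rw [h2]
    field_simp [hKne s hs]
    linear_combination (-1 : ℝ) * hrc
  obtain ⟨a, hGa⟩ : ∃ a, ∀ s ∈ I, G s = a :=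
    ⟨G s₀, fun s hs => const_of_hasDerivAt_zero' hconv hIopen hGderiv hs hs₀⟩
  have hfK : ∀ s ∈ I, f s * deriv K s = (a - 4 * deriv f s) * K s := by
    intro s hs
    have := hGa s hs
    rw [hGdef] at this
    field_simp [hKne s hs] at this
    linear_combination this
  -- Step 2: H = f f'' + f'^2 - a f' has zero derivative
  set H : ℝ → ℝ := fun t => f t * deriv (deriv f) t + (deriv f t) ^ 2 - a * deriv f t with hHdef
  have hHderiv : ∀ s ∈ I, HasDerivAt H 0 s := by
    intro s hs
    have h1 : HasDerivAt H
        ((deriv f s * deriv (deriv f) s + f s * deriv (deriv (deriv f)) s)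
          + 2 * deriv f s ^ 1 * deriv (deriv f) s - a * deriv (deriv f) s) s :=
      (((Hf s hs).mul (Hf2 s hs)).add ((Hf1 s hs).pow 2)).sub ((Hf1 s hs).const_mul a)
    convert h1 using 1
    have e1 := hK1f s hs
    have e2 := hfK s hs
    have e3 := hf2val s hs
    have hfne' := hfne s hs
    field_simp
    linear_combination (-1 : ℝ) * e1 + f s * e2 + (a - 4 * deriv f s) * e3
  obtain ⟨b, hHb⟩ : ∃ b, ∀ s ∈ I, H s = b :=
    ⟨H s₀, fun s hs => const_of_hasDerivAt_zero' hconv hIopen hHderiv hs hs₀⟩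
  -- Step 3: L = f f' - a f - b s has zero derivative
  set L : ℝ → ℝ := fun t => f t * deriv f t - a * f t - b * t with hLdef
  have hLderiv : ∀ s ∈ I, HasDerivAt L 0 s := by
    intro s hs
    have h1 : HasDerivAt L
        ((deriv f s * deriv f s + f s * deriv (deriv f) s) - a * deriv f s - b * 1) s :=
      ((((Hf s hs).mul (Hf1 s hs))).sub ((Hf s hs).const_mul a)).sub
        ((hasDerivAt_id s).const_mul b)
    convert h1 using 1
    have := hHb s hs
    rw [hHdef] at this
    linear_combination -this
  obtain ⟨c, hLc⟩ : ∃ c, ∀ s ∈ I, L s = c :=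
    ⟨L s₀, fun s hs => const_of_hasDerivAt_zero' hconv hIopen hLderiv hs hs₀⟩
  refine ⟨a, b, c, fun s hs => ?_⟩
  have := hLc s hs
  rw [hLdef] at this
  linear_combination this
end

section
/- Let I ⊆ ℝ be an interval, a, b, c ∈ ℝ, and f : I → ℝ a positive smooth function satisfying f(s) f'(s) = a f(s) + b s + c for all s ∈ I. Then the function K(s) = -f''(s)/f(s) satisfies the Ricci condition K K'' - (K')² - 4K³ + (f'/f) K K' = 0 on I. -/
/-- If `f` is positive, smooth on the open interval `I` and satisfies
`f f' = a f + b s + c` on `I`, then `K = -f''/f` satisfies the Ricci condition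
`K K'' - (K')² - 4K³ + (f'/f) K K' = 0` on `I`. -/
theorem first_order_ODE_implies_ricci_condition
    (I : Set ℝ) (hIopen : IsOpen I) (hIinterval : I.OrdConnected)
    (a b c : ℝ) (f : ℝ → ℝ) (hsmooth : ContDiffOn ℝ (⊤ : ℕ∞) f I)
    (hpos : ∀ s ∈ I, 0 < f s)
    (hode : ∀ s ∈ I, f s * deriv f s = a * f s + b * s + c)
    (K : ℝ → ℝ) (hK : ∀ s, K s = -(deriv (deriv f) s / f s)) :
    ∀ s ∈ I,
      K s * deriv (deriv K) s - (deriv K s) ^ 2 - 4 * (K s) ^ 3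
        + (deriv f s / f s) * K s * deriv K s = 0 := by
  set f1 := deriv f with hf1def
  set f2 := deriv f1 with hf2def
  set f3 := deriv f2 with hf3def
  set f4 := deriv f3 with hf4def
  have hs1 : ContDiffOn ℝ (⊤ : ℕ∞) f1 I := hsmooth.deriv_of_isOpen hIopen (by simp)
  have hs2 : ContDiffOn ℝ (⊤ : ℕ∞) f2 I := hs1.deriv_of_isOpen hIopen (by simp)
  have hs3 : ContDiffOn ℝ (⊤ : ℕ∞) f3 I := hs2.deriv_of_isOpen hIopen (by simp)
  have hd : ∀ (g : ℝ → ℝ), ContDiffOn ℝ (⊤ : ℕ∞) g I → ∀ s ∈ I, HasDerivAt g (deriv g s) s := by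
    intro g hg s hs
    exact ((hg.differentiableOn (by simp)).differentiableAt (hIopen.mem_nhds hs)).hasDerivAt
  have h1 : ∀ s ∈ I, HasDerivAt f (f1 s) s := hd f hsmooth
  have h2 : ∀ s ∈ I, HasDerivAt f1 (f2 s) s := hd f1 hs1
  have h3 : ∀ s ∈ I, HasDerivAt f2 (f3 s) s := hd f2 hs2
  have h4 : ∀ s ∈ I, HasDerivAt f3 (f4 s) s := hd f3 hs3
  -- first differentiated identity
  have E1 : ∀ s ∈ I, f1 s * f1 s + f s * f2 s = a * f1 s + b := by
    intro s hs
    have heq : (fun t => f t * f1 t) =ᶠ[nhds s] (fun t => a * f t + b * t + c) :=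
      Filter.eventually_of_mem (hIopen.mem_nhds hs) hode
    have hL : HasDerivAt (fun t => f t * f1 t) (f1 s * f1 s + f s * f2 s) s :=
      (h1 s hs).mul (h2 s hs)
    have hR : HasDerivAt (fun t => a * f t + b * t + c) (a * f1 s + b) s := by
      have := (((h1 s hs).const_mul a).add (((hasDerivAt_id s).const_mul b).add_const c))
      rw [mul_one] at this
      refine this.congr_of_eventuallyEq (Filter.Eventually.of_forall fun t => ?_)
      simp [add_assoc]
    have := heq.deriv_eq
    rw [hL.deriv, hR.deriv] at this
    exact this
  -- second differentiated identity
  have E2 : ∀ s ∈ I, 3 * f1 s * f2 s + f s * f3 s = a * f2 s := by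
    intro s hs
    have heq : (fun t => f1 t * f1 t + f t * f2 t) =ᶠ[nhds s] (fun t => a * f1 t + b) :=
      Filter.eventually_of_mem (hIopen.mem_nhds hs) E1
    have hL : HasDerivAt (fun t => f1 t * f1 t + f t * f2 t)
        ((f2 s * f1 s + f1 s * f2 s) + (f1 s * f2 s + f s * f3 s)) s :=
      ((h2 s hs).mul (h2 s hs)).add ((h1 s hs).mul (h3 s hs))
    have hR : HasDerivAt (fun t => a * f1 t + b) (a * f2 s) s :=
      ((h2 s hs).const_mul a).add_const b
    have := heq.deriv_eq
    rw [hL.deriv, hR.deriv] at this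
    linarith
  -- third differentiated identity
  have E3 : ∀ s ∈ I, 3 * f2 s * f2 s + 4 * f1 s * f3 s + f s * f4 s = a * f3 s := by
    intro s hs
    have heq : (fun t => 3 * f1 t * f2 t + f t * f3 t) =ᶠ[nhds s] (fun t => a * f2 t) :=
      Filter.eventually_of_mem (hIopen.mem_nhds hs) E2
    have hL : HasDerivAt (fun t => 3 * f1 t * f2 t + f t * f3 t)
        ((3 * f2 s * f2 s + 3 * f1 s * f3 s) + (f1 s * f3 s + f s * f4 s)) s := by
      have hL1 : HasDerivAt (fun t => 3 * f1 t * f2 t)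
          (3 * f2 s * f2 s + 3 * f1 s * f3 s) s := by
        have := ((h2 s hs).const_mul 3).mul (h3 s hs)
        exact this
      exact hL1.add ((h1 s hs).mul (h4 s hs))
    have hR : HasDerivAt (fun t => a * f2 t) (a * f3 s) s := (h3 s hs).const_mul a
    have := heq.deriv_eq
    rw [hL.deriv, hR.deriv] at this
    linarith
  -- K as a function
  have hKfun : K = fun t => -(f2 t / f t) := funext hK
  have hne : ∀ s ∈ I, f s ≠ 0 := fun s hs => ne_of_gt (hpos s hs)
  -- first derivative of K on I
  have hKd : ∀ s ∈ I, HasDerivAt K (-((f3 s * f s - f2 s * f1 s) / f s ^ 2)) s := by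
    intro s hs
    rw [hKfun]
    exact ((h3 s hs).div (h1 s hs) (hne s hs)).neg
  have hK' : ∀ s ∈ I, deriv K s = -((f3 s * f s - f2 s * f1 s) / f s ^ 2) :=
    fun s hs => (hKd s hs).deriv
  -- second derivative of K on I
  have hK'' : ∀ s ∈ I, deriv (deriv K) s =
      -(((f4 s * f s + f3 s * f1 s - (f3 s * f1 s + f2 s * f2 s)) * f s ^ 2 -
          (f3 s * f s - f2 s * f1 s) * (2 * f s ^ 1 * f1 s)) / (f s ^ 2) ^ 2) := by
    intro s hs
    have heq : deriv K =ᶠ[nhds s]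
        (fun t => -((f3 t * f t - f2 t * f1 t) / f t ^ 2)) :=
      Filter.eventually_of_mem (hIopen.mem_nhds hs) hK'
    have hN : HasDerivAt (fun t => f3 t * f t - f2 t * f1 t)
        (f4 s * f s + f3 s * f1 s - (f3 s * f1 s + f2 s * f2 s)) s :=
      ((h4 s hs).mul (h1 s hs)).sub ((h3 s hs).mul (h2 s hs))
    have hD : HasDerivAt (fun t => f t ^ 2) ((2 : ℕ) * f s ^ 1 * f1 s) s :=
      (h1 s hs).pow 2
    have hdne : f s ^ 2 ≠ 0 := pow_ne_zero 2 (hne s hs)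
    have hG : HasDerivAt (fun t => -((f3 t * f t - f2 t * f1 t) / f t ^ 2))
        (-(((f4 s * f s + f3 s * f1 s - (f3 s * f1 s + f2 s * f2 s)) * f s ^ 2 -
            (f3 s * f s - f2 s * f1 s) * (2 * f s ^ 1 * f1 s)) / (f s ^ 2) ^ 2)) s := by
      have := (hN.div hD hdne).neg
      simpa [Pi.div_def, Pi.neg_def] using this
    rw [heq.deriv_eq, hG.deriv]
  -- finish by algebra
  intro s hs
  rw [hK s, hK' s hs, hK'' s hs]
  have e2 := E2 s hs
  have e3 := E3 s hs
  have hne' := hne s hs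
  field_simp
  linear_combination (f s * f2 s) * e3 - (f s * f3 s) * e2
end

section
/- For (a, b, c) ∈ ℝ³, the set Ω = {(s, x) ∈ ℝ × (0, +∞) : (a x + b s + c)² < x²} is nonempty if and only if (a, b, c) does not belong to E = E₁ ∪ E₂ ∪ E₃, where E₁ = {(x₁, 0, 0) : |x₁| ≥ 1}, E₂ = {(x₁, 0, x₃) : x₁ ≥ 1 and x₃ > 0}, and E₃ = {(x₁, 0, x₃) : x₁ ≤ -1 and x₃ < 0}. -/
/-- The set `Ω = {(s, x) ∈ ℝ × (0, ∞) : (a x + b s + c)² < x²}` is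
nonempty iff `(a, b, c)` does not belong to
`E₁ ∪ E₂ ∪ E₃`, where `E₁ = {(x₁,0,0) : |x₁| ≥ 1}`, `E₂ = {(x₁,0,x₃) : x₁ ≥ 1, x₃ > 0}`
and `E₃ = {(x₁,0,x₃) : x₁ ≤ -1, x₃ < 0}`. -/
theorem omega_nonempty_iff_not_in_exceptional_set (a b c : ℝ) :
    {p : ℝ × ℝ | 0 < p.2 ∧ (a * p.2 + b * p.1 + c) ^ 2 < p.2 ^ 2}.Nonempty ↔
      ¬ ((b = 0 ∧ c = 0 ∧ 1 ≤ |a|) ∨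
         (1 ≤ a ∧ b = 0 ∧ 0 < c) ∨
         (a ≤ -1 ∧ b = 0 ∧ c < 0)) := by
  constructor
  · rintro ⟨⟨s, x⟩, hx, hlt⟩ (⟨hb, hc, ha⟩ | ⟨ha, hb, hc⟩ | ⟨ha, hb, hc⟩) <;>
      simp only [Set.mem_setOf_eq] at hx hlt <;> subst hb
    · subst hc
      have h2 : 1 ≤ a ^ 2 := by nlinarith [sq_abs a]
      nlinarith [sq_nonneg x, sq_nonneg (a * x)]
    · nlinarith [mul_pos (show (0:ℝ) < (a - 1) * x + c by nlinarith)
        (show (0:ℝ) < (a + 1) * x + c by nlinarith)]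
    · nlinarith [mul_pos_of_neg_of_neg (show (a - 1) * x + c < 0 by nlinarith)
        (show (a + 1) * x + c < 0 by nlinarith)]
  · intro h
    by_cases hb : b = 0
    · subst hb
      by_cases ha1 : 1 ≤ a
      · have hcneg : c < 0 := by
          rcases lt_trichotomy c 0 with h' | h' | h'
          · exact h'
          · exact absurd (Or.inl ⟨rfl, h', by rw [abs_of_nonneg (by linarith)]; exact ha1⟩) h
          · exact absurd (Or.inr (Or.inl ⟨ha1, rfl, h'⟩)) h
        have ha0 : 0 < a := by linarith
        have hx : 0 < -c / a := div_pos (by linarith) ha0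
        refine ⟨(0, -c / a), hx, ?_⟩
        have hval : a * (-c / a) = -c := by
          rw [mul_comm]; exact div_mul_cancel₀ _ (ne_of_gt ha0)
        show (a * (-c / a) + 0 * 0 + c) ^ 2 < (-c / a) ^ 2
        rw [hval]
        nlinarith
      · by_cases ha2 : a ≤ -1
        · have hcpos : 0 < c := by
            rcases lt_trichotomy c 0 with h' | h' | h'
            · exact absurd (Or.inr (Or.inr ⟨ha2, rfl, h'⟩)) h
            · exact absurd (Or.inl ⟨rfl, h', by rw [abs_of_nonpos (by linarith)]; linarith⟩) h
            · exact h'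
          have ha0 : a < 0 := by linarith
          have hx : 0 < -c / a := by
            apply div_pos_of_neg_of_neg <;> linarith
          refine ⟨(0, -c / a), hx, ?_⟩
          have hval : a * (-c / a) = -c := by
            rw [mul_comm]; exact div_mul_cancel₀ _ (ne_of_lt ha0)
          show (a * (-c / a) + 0 * 0 + c) ^ 2 < (-c / a) ^ 2
          rw [hval]
          nlinarith
        · push_neg at ha1 ha2
          have hA : |a| < 1 := abs_lt.2 ⟨by linarith, ha1⟩
          have hden : 0 < 1 - |a| := by linarith
          set x := (|c| + 1) / (1 - |a|) with hxdef
          have hx : 0 < x := by positivity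
          have hxe : x * (1 - |a|) = |c| + 1 := by
            rw [hxdef]; exact div_mul_cancel₀ _ (ne_of_gt hden)
          refine ⟨(0, x), hx, ?_⟩
          have h1 : 1 ≤ x - a * x - c := by
            nlinarith [le_abs_self a, neg_abs_le a, le_abs_self c, neg_abs_le c]
          have h2 : 1 ≤ x + a * x + c := by
            nlinarith [le_abs_self a, neg_abs_le a, le_abs_self c, neg_abs_le c]
          nlinarith
    · refine ⟨((-c - a) / b, 1), one_pos, ?_⟩
      simp only [Set.mem_setOf_eq]
      have hval : b * ((-c - a) / b) = -c - a := by field_simp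
      rw [mul_one, hval]
      norm_num
end

section
/- Let b, c, d ∈ ℝ with 0 < b ≤ 1 and c² < b d, and let f̂(t) = √((b² t² + b d - c²)/b) for t ∈ ℝ. Then the mean curvature H(t) = (f̂''(t) f̂(t) + f̂'(t)² - 1)/(2 f̂(t) √(1 - f̂'(t)²)) satisfies H(t) = (b - 1)√b / (2 √(b²(1-b) t² + b d - c²)) for all t; in particular, H vanishes identically if and only if b = 1. -/
/-- For `0 < b ≤ 1`, `c² < b d` and `f̂(t) = √((b² t² + b d - c²)/b)`,
the mean curvature `H = (f̂'' f̂ + f̂'² - 1)/(2 f̂ √(1 - f̂'²))` satisfies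
`H(t) = (b - 1)√b/(2√(b²(1-b)t² + b d - c²))` for all `t`; in particular `H ≡ 0 ↔ b = 1`. -/
theorem catenoidal_ricci_mean_curvature
    (b c d : ℝ) (hb0 : 0 < b) (hb1 : b ≤ 1) (hK : c ^ 2 < b * d)
    (f : ℝ → ℝ) (hf : ∀ t : ℝ, f t = Real.sqrt ((b ^ 2 * t ^ 2 + b * d - c ^ 2) / b))
    (H : ℝ → ℝ)
    (hH : ∀ t : ℝ, H t = (deriv (deriv f) t * f t + (deriv f t) ^ 2 - 1)
      / (2 * f t * Real.sqrt (1 - (deriv f t) ^ 2))) :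
    (∀ t : ℝ, H t = (b - 1) * Real.sqrt b
      / (2 * Real.sqrt (b ^ 2 * (1 - b) * t ^ 2 + b * d - c ^ 2))) ∧
    ((∀ t : ℝ, H t = 0) ↔ b = 1) := by
  set u : ℝ → ℝ := fun t => (b ^ 2 * t ^ 2 + b * d - c ^ 2) / b with hu_def
  have hQ : ∀ t : ℝ, 0 < b ^ 2 * t ^ 2 + b * d - c ^ 2 := fun t => by nlinarith [sq_nonneg (b * t), sq_nonneg t]
  have hu : ∀ t : ℝ, 0 < u t := fun t => div_pos (hQ t) hb0
  have hR : ∀ t : ℝ, 0 < b ^ 2 * (1 - b) * t ^ 2 + b * d - c ^ 2 := fun t => by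
    nlinarith [mul_nonneg (mul_nonneg (sq_nonneg b) (sub_nonneg.2 hb1)) (sq_nonneg t)]
  have hb : b ≠ 0 := ne_of_gt hb0
  have hfeq : f = fun t => Real.sqrt (u t) := funext hf
  -- derivative of u
  have hdu : ∀ t : ℝ, HasDerivAt u (2 * b * t) t := by
    intro t
    have h1 : HasDerivAt (fun x : ℝ => (b ^ 2 * x ^ 2 + b * d - c ^ 2) / b)
        (b ^ 2 * ((2 : ℕ) * t ^ 1) / b) t :=
      ((((hasDerivAt_pow 2 t).const_mul (b ^ 2)).add_const (b * d)).sub_const (c ^ 2)).div_const b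
    convert h1 using 1
    field_simp
    ring
  -- derivative of f
  have hdf : ∀ t : ℝ, HasDerivAt f (b * t / Real.sqrt (u t)) t := by
    intro t
    rw [hfeq]
    have h2 : HasDerivAt (fun t => Real.sqrt (u t)) (1 / (2 * Real.sqrt (u t)) * (2 * b * t)) t :=
      (Real.hasDerivAt_sqrt (ne_of_gt (hu t))).comp t (hdu t)
    convert h2 using 1
    have hs : Real.sqrt (u t) ≠ 0 := ne_of_gt (Real.sqrt_pos.2 (hu t))
    field_simp
  have hdf' : deriv f = fun t => b * t / Real.sqrt (u t) := funext fun t => (hdf t).deriv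
  -- second derivative
  have hdff : ∀ t : ℝ, deriv (deriv f) t = (b * d - c ^ 2) / (u t * Real.sqrt (u t)) := by
    intro t
    have hs : Real.sqrt (u t) ≠ 0 := ne_of_gt (Real.sqrt_pos.2 (hu t))
    have hsq : Real.sqrt (u t) ^ 2 = u t := Real.sq_sqrt (hu t).le
    have hnum : HasDerivAt (fun t : ℝ => b * t) b t := by
      simpa using (hasDerivAt_id t).const_mul b
    have hsqrt : HasDerivAt (fun t => Real.sqrt (u t)) (1 / (2 * Real.sqrt (u t)) * (2 * b * t)) t :=
      (Real.hasDerivAt_sqrt (ne_of_gt (hu t))).comp t (hdu t)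
    have hdiv : HasDerivAt (fun t => b * t / Real.sqrt (u t))
        ((b * Real.sqrt (u t) - b * t * (1 / (2 * Real.sqrt (u t)) * (2 * b * t)))
          / (Real.sqrt (u t)) ^ 2) t := hnum.div hsqrt hs
    rw [hdf']
    rw [hdiv.deriv]
    have hut : b * d - c ^ 2 = b * u t - b ^ 2 * t ^ 2 := by
      rw [hu_def]; field_simp; ring
    rw [hut]
    set s : ℝ := Real.sqrt (u t) with hsdef
    rw [← hsq]
    field_simp
  -- main formula
  have main : ∀ t : ℝ, H t = (b - 1) * Real.sqrt b
      / (2 * Real.sqrt (b ^ 2 * (1 - b) * t ^ 2 + b * d - c ^ 2)) := by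
    intro t
    have hs : Real.sqrt (u t) ≠ 0 := ne_of_gt (Real.sqrt_pos.2 (hu t))
    have hsq : Real.sqrt (u t) ^ 2 = u t := Real.sq_sqrt (hu t).le
    have hut : b * d - c ^ 2 = b * u t - b ^ 2 * t ^ 2 := by
      rw [hu_def]; field_simp; ring
    -- numerator
    have hnum : deriv (deriv f) t * f t + (deriv f t) ^ 2 - 1 = b - 1 := by
      rw [hdff t, hdf', hf t]
      show (b * d - c ^ 2) / (u t * Real.sqrt (u t)) * Real.sqrt ((b ^ 2 * t ^ 2 + b * d - c ^ 2) / b)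
        + (b * t / Real.sqrt (u t)) ^ 2 - 1 = b - 1
      have : Real.sqrt ((b ^ 2 * t ^ 2 + b * d - c ^ 2) / b) = Real.sqrt (u t) := by rw [hu_def]
      rw [this, hut]
      set s : ℝ := Real.sqrt (u t) with hsdef
      rw [← hsq]
      field_simp
      ring
    -- 1 - f'^2
    have h1f : 1 - (deriv f t) ^ 2
        = (b ^ 2 * (1 - b) * t ^ 2 + b * d - c ^ 2) / (b * u t) := by
      rw [hdf']
      have hAR : b ^ 2 * (1 - b) * t ^ 2 + b * d - c ^ 2 = b * u t - b ^ 3 * t ^ 2 := by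
        rw [hu_def]; field_simp; ring
      rw [hAR]
      show 1 - (b * t / Real.sqrt (u t)) ^ 2 = (b * u t - b ^ 3 * t ^ 2) / (b * u t)
      set s : ℝ := Real.sqrt (u t) with hsdef
      rw [← hsq]
      field_simp
    have hRb : Real.sqrt (1 - (deriv f t) ^ 2)
        = Real.sqrt (b ^ 2 * (1 - b) * t ^ 2 + b * d - c ^ 2)
          / (Real.sqrt b * Real.sqrt (u t)) := by
      rw [h1f, Real.sqrt_div (hR t).le, Real.sqrt_mul hb0.le]
    have hsb : Real.sqrt b ≠ 0 := ne_of_gt (Real.sqrt_pos.2 hb0)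
    have hsR : Real.sqrt (b ^ 2 * (1 - b) * t ^ 2 + b * d - c ^ 2) ≠ 0 :=
      ne_of_gt (Real.sqrt_pos.2 (hR t))
    rw [hH t, hnum, hRb, hf t]
    show (b - 1) / (2 * Real.sqrt (u t) * _) = _
    field_simp
  refine ⟨main, ?_, fun hb1' t => by rw [main t, hb1']; norm_num⟩
  intro h
  have h0 := (main 0).symm.trans (h 0)
  have hsb : 0 < Real.sqrt b := Real.sqrt_pos.2 hb0
  have hsR : 0 < Real.sqrt (b ^ 2 * (1 - b) * 0 ^ 2 + b * d - c ^ 2) := Real.sqrt_pos.2 (hR 0)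
  have := div_eq_zero_iff.mp h0
  rcases this with h' | h'
  · rcases mul_eq_zero.mp h' with h'' | h''
    · linarith
    · exact absurd h'' (ne_of_gt hsb)
  · linarith
end

section
/- Let I ⊆ ℝ be an interval, a, c ∈ ℝ with a ≠ 0, and f : I → ℝ a positive smooth function satisfying f(s) f'(s) = a f(s) + c for all s ∈ I. Then either a f(s) + c = 0 for all s ∈ I, or a f(s) + c ≠ 0 for all s ∈ I. -/
open Set Filter Metric intervalIntegral Real

/-- Local vanishing lemma: if `a f + c` vanishes at a point of `I`, it vanishes
near that point. -/
lemma case_b_eq_zero_local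
    (I : Set ℝ) (hIopen : IsOpen I)
    (a c : ℝ)
    (f : ℝ → ℝ) (hsmooth : ContDiffOn ℝ (⊤ : ℕ∞) f I)
    (hpos : ∀ s ∈ I, 0 < f s)
    (hode : ∀ s ∈ I, f s * deriv f s = a * f s + c)
    (s₀ : ℝ) (hs₀ : s₀ ∈ I) (h0 : a * f s₀ + c = 0) :
    ∀ᶠ s in nhds s₀, a * f s + c = 0 := by
  obtain ⟨ε, εpos, hball⟩ := Metric.isOpen_iff.mp hIopen s₀ hs₀
  set B := Metric.ball s₀ ε with hB
  have hBopen : IsOpen B := Metric.isOpen_ball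
  have hconv : Convex ℝ B := convex_ball _ _
  have hfcont : ContinuousOn f I := hsmooth.continuousOn
  -- f has the derivative (a f + c)/f at points of I
  have hfd : ∀ s ∈ I, HasDerivAt f ((a * f s + c) / f s) s := by
    intro s hs
    have hdiff : DifferentiableAt ℝ f s :=
      (hsmooth.contDiffAt (hIopen.mem_nhds hs)).differentiableAt (by simp)
    have := hdiff.hasDerivAt
    have hne : f s ≠ 0 := (hpos s hs).ne'
    have hd : deriv f s = (a * f s + c) / f s := by
      field_simp
      linarith [hode s hs]
    rwa [hd] at this
  -- the coefficient function
  have hLcont : ContinuousOn (fun u => a / f u) I :=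
    (continuousOn_const.div hfcont fun u hu => (hpos u hu).ne')
  set F : ℝ → ℝ := fun t => ∫ u in s₀..t, a / f u with hF
  have hFd : ∀ t ∈ B, HasDerivAt F (a / f t) t := by
    intro t ht
    have hsub : Set.uIcc s₀ t ⊆ B :=
      (hconv.ordConnected).uIcc_subset (Metric.mem_ball_self εpos) ht
    have hint : IntervalIntegrable (fun u => a / f u) MeasureTheory.volume s₀ t :=
      (hLcont.mono (hsub.trans hball)).intervalIntegrable
    exact intervalIntegral.integral_hasDerivAt_right hint
      ((hLcont.stronglyMeasurableAtFilter hIopen) t (hball ht))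
      ((hLcont.continuousAt (hIopen.mem_nhds (hball ht))))
  set h : ℝ → ℝ := fun t => (a * f t + c) * Real.exp (-F t) with hh
  have hhd : ∀ t ∈ B, HasDerivAt h 0 t := by
    intro t ht
    have htI : t ∈ I := hball ht
    have hne : f t ≠ 0 := (hpos t htI).ne'
    have hg : HasDerivAt (fun t => a * f t + c) (a * ((a * f t + c) / f t)) t :=
      ((hfd t htI).const_mul a).add_const c
    have hE : HasDerivAt (fun t => Real.exp (-F t)) (Real.exp (-F t) * (-(a / f t))) t :=
      ((hFd t ht).neg).exp
    have := hg.mul hE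
    exact this.congr_deriv (by ring)
  -- h is constant on B, hence zero, hence a f + c = 0 on B
  have hconst : ∀ t ∈ B, h t = h s₀ := by
    intro t ht
    have hdiff : DifferentiableOn ℝ h B := fun x hx =>
      ((hhd x hx).differentiableAt).differentiableWithinAt
    refine hconv.is_const_of_fderivWithin_eq_zero hdiff ?_ ht (Metric.mem_ball_self εpos)
    intro x hx
    have := (hhd x hx).hasFDerivAt.fderiv
    rw [fderivWithin_of_isOpen hBopen hx, this]
    ext y; simp
  have hzero : ∀ t ∈ B, a * f t + c = 0 := by
    intro t ht
    have : h t = 0 := by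
      rw [hconst t ht, hh]; simp [h0]
    have hexp : Real.exp (-F t) ≠ 0 := Real.exp_ne_zero _
    exact by
      rcases mul_eq_zero.mp this with h' | h'
      · exact h'
      · exact absurd h' hexp
  filter_upwards [hBopen.mem_nhds (Metric.mem_ball_self εpos)] with t ht
  exact hzero t ht

/-- If `f` is positive, smooth on the open interval `I` and satisfies
`f f' = a f + c` on `I` with `a ≠ 0`, then either `a f + c` vanishes identically on `I`,
or `a f + c` vanishes nowhere on `I`. -/
theorem case_b_eq_zero_dichotomy
    (I : Set ℝ) (hIopen : IsOpen I) (hIinterval : I.OrdConnected)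
    (a c : ℝ) (ha : a ≠ 0)
    (f : ℝ → ℝ) (hsmooth : ContDiffOn ℝ (⊤ : ℕ∞) f I)
    (hpos : ∀ s ∈ I, 0 < f s)
    (hode : ∀ s ∈ I, f s * deriv f s = a * f s + c) :
    (∀ s ∈ I, a * f s + c = 0) ∨ (∀ s ∈ I, a * f s + c ≠ 0) := by
  by_cases hz : ∃ s₀ ∈ I, a * f s₀ + c = 0
  · left
    obtain ⟨s₀, hs₀, h0⟩ := hz
    by_contra hcon
    push_neg at hcon
    obtain ⟨s₁, hs₁, h1⟩ := hcon
    -- I is preconnected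
    have hpc : IsPreconnected I := hIinterval.isPreconnected
    -- zero set is open
    set Z : Set ℝ := {s | s ∈ I ∧ a * f s + c = 0} with hZ
    have hZopen : IsOpen Z := by
      rw [isOpen_iff_mem_nhds]
      intro s hs
      have hev := case_b_eq_zero_local I hIopen a c f hsmooth hpos hode s hs.1 hs.2
      filter_upwards [hev, hIopen.mem_nhds hs.1] with t ht htI
      exact ⟨htI, ht⟩
    -- nonzero set is open
    set N : Set ℝ := {s | s ∈ I ∧ a * f s + c ≠ 0} with hN
    have hNopen : IsOpen N := by
      rw [isOpen_iff_mem_nhds]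
      intro s hs
      have hcont : ContinuousAt (fun t => a * f t + c) s :=
        ((hsmooth.contDiffAt (hIopen.mem_nhds hs.1)).continuousAt.const_smul a).add
          continuousAt_const
      have hev : ∀ᶠ t in nhds s, a * f t + c ≠ 0 :=
        hcont.eventually_ne hs.2
      filter_upwards [hev, hIopen.mem_nhds hs.1] with t ht htI
      exact ⟨htI, ht⟩
    have hsub : I ⊆ Z ∪ N := by
      intro s hs
      by_cases h : a * f s + c = 0
      · exact Or.inl ⟨hs, h⟩
      · exact Or.inr ⟨hs, h⟩
    have hne1 : (I ∩ Z).Nonempty := ⟨s₀, hs₀, hs₀, h0⟩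
    have hne2 : (I ∩ N).Nonempty := ⟨s₁, hs₁, hs₁, h1⟩
    obtain ⟨x, hxI, hxZ, hxN⟩ := hpc Z N hZopen hNopen hsub hne1 hne2
    exact hxN.2 hxZ.2
  · right
    push_neg at hz
    exact hz
end

section
/- Let a, c ∈ ℝ with 0 < a ≤ 1 and c < 0, and fix t₀ > -c/a. Define ĝ(t) = ∫_{t₀}^{t} √(τ²/(a τ + c)² - 1) dτ for t > -c/a. Then ĝ(t) → -∞ as t → (-c/a)⁺ and ĝ(t) → +∞ as t → +∞. -/
/-!
With `u = a τ + c`, the hypothesis `a ≤ 1` gives `τ - u ≥ -c` and hence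
`τ² - u² = (τ - u)(τ + u) ≥ -c τ`, so the integrand is at least `√(-c τ) / u`.
Near `τ = -c/a` we have `u = a (τ + c/a)`, so the integrand dominates a multiple of
`1 / (τ + c/a)`, whose primitive `log (τ + c/a)` tends to `-∞`; for large `τ` we have `u ≤ τ`,
so it dominates a multiple of `1 / √τ`, whose primitive `√τ` tends to `+∞`.
-/

open Filter Topology Set

lemma tendsto_intervalIntegral_atTop_of_hasDerivAt_le {f G G' : ℝ → ℝ} {t₀ : ℝ}
    (hf : ContinuousOn f (Ici t₀)) (hG : ∀ x ∈ Ici t₀, HasDerivAt G (G' x) x)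
    (hle : ∀ x ∈ Ioi t₀, G' x ≤ f x) (hG_top : Tendsto G atTop atTop) :
    Tendsto (fun t => ∫ τ in t₀..t, f τ) atTop atTop := by
  refine tendsto_atTop_mono' _ ?_ (tendsto_atTop_add_const_right _ (-G t₀) hG_top)
  filter_upwards [eventually_ge_atTop t₀] with t ht
  have hIcc : Icc t₀ t ⊆ Ici t₀ := Icc_subset_Ici_self
  exact intervalIntegral.sub_le_integral_of_hasDeriv_right_of_le ht
    (fun x hx => (hG x (hIcc hx)).continuousAt.continuousWithinAt)
    (fun x hx => (hG x (hIcc (Ioo_subset_Icc_self hx))).hasDerivWithinAt)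
    ((hf.mono hIcc).integrableOn_Icc) (fun x hx => hle x hx.1)

lemma tendsto_intervalIntegral_nhdsGT_of_hasDerivAt_le {f G G' : ℝ → ℝ} {r t₀ : ℝ}
    (hr : r < t₀) (hf : ContinuousOn f (Ioc r t₀)) (hG : ∀ x ∈ Ioc r t₀, HasDerivAt G (G' x) x)
    (hle : ∀ x ∈ Ioo r t₀, G' x ≤ f x) (hG_bot : Tendsto G (𝓝[>] r) atBot) :
    Tendsto (fun t => ∫ τ in t₀..t, f τ) (𝓝[>] r) atBot := by
  refine tendsto_atBot_mono' _ ?_ (tendsto_atBot_add_const_right _ (-G t₀) hG_bot)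
  filter_upwards [Ioo_mem_nhdsGT hr] with t ht
  have hIcc : Icc t t₀ ⊆ Ioc r t₀ := Icc_subset_Ioc_iff ht.2.le |>.2 ⟨ht.1, le_rfl⟩
  have := intervalIntegral.sub_le_integral_of_hasDeriv_right_of_le ht.2.le
    (fun x hx => (hG x (hIcc hx)).continuousAt.continuousWithinAt)
    (fun x hx => (hG x (hIcc (Ioo_subset_Icc_self hx))).hasDerivWithinAt)
    ((hf.mono hIcc).integrableOn_Icc) (fun x hx => hle x ⟨ht.1.trans hx.1, hx.2⟩)
  rw [intervalIntegral.integral_symm]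
  linarith

noncomputable def funnelIntegrand (a c τ : ℝ) : ℝ := √(τ ^ 2 / (a * τ + c) ^ 2 - 1)

lemma mul_add_eq_mul_sub_neg_div {a : ℝ} (ha : a ≠ 0) (c τ : ℝ) :
    a * τ + c = a * (τ - -c / a) := by
  field_simp
  ring

lemma mul_add_pos_of_neg_div_lt {a c τ : ℝ} (ha : 0 < a) (hτ : -c / a < τ) : 0 < a * τ + c := by
  rw [mul_add_eq_mul_sub_neg_div ha.ne']
  exact mul_pos ha (sub_pos.2 hτ)

lemma continuousOn_funnelIntegrand {a c : ℝ} (ha : 0 < a) :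
    ContinuousOn (funnelIntegrand a c) (Ioi (-c / a)) :=
  ((continuousOn_pow 2).div (by fun_prop) fun τ hτ =>
    pow_ne_zero 2 (mul_add_pos_of_neg_div_lt ha hτ).ne').sub continuousOn_const |>.sqrt

section Bounds

variable {a c τ : ℝ} (ha0 : 0 < a) (ha1 : a ≤ 1) (hc : c ≤ 0)
include ha0 ha1 hc

lemma sqrt_neg_mul_div_le_funnelIntegrand (hu : 0 < a * τ + c) :
    √(-c * τ) / (a * τ + c) ≤ funnelIntegrand a c τ := by
  have hτ : 0 < τ := pos_of_mul_pos_right (by linarith : 0 < a * τ) ha0.le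
  have hu2 : 0 < (a * τ + c) ^ 2 := by positivity
  calc √(-c * τ) / (a * τ + c) = √(-c * τ / (a * τ + c) ^ 2) := by
        rw [Real.sqrt_div' _ hu2.le, Real.sqrt_sq hu.le]
    _ ≤ funnelIntegrand a c τ := by
        refine Real.sqrt_le_sqrt ?_
        rw [le_sub_iff_add_le, div_add_one hu2.ne', div_le_div_iff_of_pos_right hu2]
        nlinarith [mul_nonneg (sub_nonneg.2 ha1) hτ.le]

lemma div_sub_le_funnelIntegrand (hτ : -c / a < τ) :
    √(-c * (-c / a)) / a / (τ - -c / a) ≤ funnelIntegrand a c τ := by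
  have hu : 0 < a * τ + c := mul_add_pos_of_neg_div_lt ha0 hτ
  calc √(-c * (-c / a)) / a / (τ - -c / a) = √(-c * (-c / a)) / (a * τ + c) := by
        rw [div_div, ← mul_add_eq_mul_sub_neg_div ha0.ne']
    _ ≤ √(-c * τ) / (a * τ + c) := by gcongr; linarith
    _ ≤ funnelIntegrand a c τ := sqrt_neg_mul_div_le_funnelIntegrand ha0 ha1 hc hu

lemma div_sqrt_le_funnelIntegrand (hτ : -c / a < τ) :
    √(-c) / (2 * √τ) ≤ funnelIntegrand a c τ := by
  have hu : 0 < a * τ + c := mul_add_pos_of_neg_div_lt ha0 hτ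
  have hτ0 : 0 < τ := pos_of_mul_pos_right (by linarith : 0 < a * τ) ha0.le
  calc √(-c) / (2 * √τ) = √(-c) * (1 / (2 * √τ)) := by ring
    _ ≤ √(-c) * (√τ / (a * τ + c)) := by
        refine mul_le_mul_of_nonneg_left ?_ (Real.sqrt_nonneg _)
        rw [div_le_div_iff₀ (by positivity) hu]
        nlinarith [Real.mul_self_sqrt hτ0.le]
    _ = √(-c * τ) / (a * τ + c) := by rw [Real.sqrt_mul (neg_nonneg.2 hc), mul_div_assoc]
    _ ≤ funnelIntegrand a c τ := sqrt_neg_mul_div_le_funnelIntegrand ha0 ha1 hc hu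

end Bounds

/-- For `0 < a ≤ 1`, `c < 0`, `t₀ > -c/a` and
`ĝ(t) = ∫_{t₀}^{t} √(τ²/(a τ + c)² - 1) dτ`, one has `ĝ(t) → -∞` as `t → (-c/a)⁺` and
`ĝ(t) → +∞` as `t → +∞`. -/
theorem funnel_ricci_height_limits
    (a c t₀ : ℝ) (ha0 : 0 < a) (ha1 : a ≤ 1) (hc : c < 0) (ht₀ : -c / a < t₀)
    (g : ℝ → ℝ)
    (hg : ∀ t : ℝ, g t = ∫ τ in t₀..t, Real.sqrt (τ ^ 2 / (a * τ + c) ^ 2 - 1)) :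
    Tendsto g (𝓝[>] (-c / a)) atBot ∧ Tendsto g atTop atTop := by
  set r := -c / a
  have hr : 0 < r := div_pos (neg_pos.2 hc) ha0
  have hf : ContinuousOn (funnelIntegrand a c) (Ioi r) := continuousOn_funnelIntegrand ha0
  obtain rfl : g = fun t => ∫ τ in t₀..t, funnelIntegrand a c τ := funext hg
  constructor
  · have hK : 0 < √(-c * r) / a := div_pos (Real.sqrt_pos.2 (mul_pos (neg_pos.2 hc) hr)) ha0
    have hlog : Tendsto (fun τ => Real.log (τ - r)) (𝓝[>] r) atBot := by
      have := (map_subRight_nhdsGT (c := r) (a := r)).le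
      rw [sub_self] at this
      exact Real.tendsto_log_nhdsGT_zero.comp this
    refine tendsto_intervalIntegral_nhdsGT_of_hasDerivAt_le ht₀ (hf.mono Ioc_subset_Ioi_self)
      (G := fun τ => √(-c * r) / a * Real.log (τ - r)) (fun x hx => ?_)
      (fun x hx => div_sub_le_funnelIntegrand ha0 ha1 hc.le hx.1) (hlog.const_mul_atBot hK)
    simpa only [mul_one_div] using
      (((hasDerivAt_id' x).sub_const r).log (sub_pos.2 hx.1).ne').const_mul (√(-c * r) / a)
  · refine tendsto_intervalIntegral_atTop_of_hasDerivAt_le (hf.mono (Ici_subset_Ioi.2 ht₀))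
      (G := fun τ => √(-c) * √τ) (fun x hx => ?_)
      (fun x hx => div_sqrt_le_funnelIntegrand ha0 ha1 hc.le (ht₀.trans hx))
      (Real.tendsto_sqrt_atTop.const_mul_atTop (Real.sqrt_pos.2 (neg_pos.2 hc)))
    simpa only [mul_one_div] using
      (Real.hasDerivAt_sqrt (hr.trans_le (ht₀.le.trans hx)).ne').const_mul (√(-c))
end

section
/- Let a, b, c, d ∈ ℝ with a ≠ 0 and b ≠ 0, let J ⊆ ℝ be an interval containing t₀ on which R(τ) = τ² - τ - b/a² has no zeros, and define E(t) = exp(-∫_{t₀}^{t} τ/R(τ) dτ), f(t) = a d t E(t) and s(t) = d E(t) - c/b for t ∈ J. If t ∈ J satisfies f(t) > 0 and (a f(t) + b s(t) + c)² ≤ f(t)², then -1 ≤ b/(a t) + a ≤ 1. -/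
/-- Let `a ≠ 0`, `b ≠ 0`, let `J` be an interval containing `t₀` on which
`R(τ) = τ² - τ - b/a²` has no zeros, and set `E(t) = exp(-∫_{t₀}^{t} τ/R(τ) dτ)`,
`f(t) = a d t E(t)`, `s(t) = d E(t) - c/b`. If `t ∈ J` satisfies `f(t) > 0` and
`(a f(t) + b s(t) + c)² ≤ f(t)²`, then `-1 ≤ b/(a t) + a ≤ 1`. -/
theorem case_a_and_b_nonzero_domain_constraint
    (a b c d t₀ : ℝ) (ha : a ≠ 0) (hb : b ≠ 0)
    (J : Set ℝ) (hJ : J.OrdConnected) (ht₀ : t₀ ∈ J)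
    (hR : ∀ τ ∈ J, τ ^ 2 - τ - b / a ^ 2 ≠ 0)
    (E f s : ℝ → ℝ)
    (hE : ∀ t : ℝ, E t = Real.exp (-(∫ τ in t₀..t, τ / (τ ^ 2 - τ - b / a ^ 2))))
    (hf : ∀ t : ℝ, f t = a * d * t * E t)
    (hs : ∀ t : ℝ, s t = d * E t - c / b) :
    ∀ t ∈ J, 0 < f t → (a * f t + b * s t + c) ^ 2 ≤ (f t) ^ 2 →
      -1 ≤ b / (a * t) + a ∧ b / (a * t) + a ≤ 1 := by
  intro t ht hfpos hsq
  have ht0 : t ≠ 0 := by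
    intro h
    rw [hf, h] at hfpos
    simp at hfpos
  have key : a * f t + b * s t + c = (b / (a * t) + a) * f t := by
    rw [hf, hs]
    field_simp
    ring
  rw [key, mul_pow] at hsq
  have hf2 : 0 < (f t) ^ 2 := by positivity
  have hu2 : (b / (a * t) + a) ^ 2 ≤ 1 := by
    nlinarith
  constructor <;> nlinarith [sq_nonneg (b / (a * t) + a - 1), sq_nonneg (b / (a * t) + a + 1)]
end

section
/- For every b ∈ (0, 1] there exists ρ ∈ (0, 1) such that (∫₀^ρ √(((1 - b)τ² + ρ(1 - ρ))/(τ² + ρ(1 - ρ))) dτ)² = 1 - b ρ. -/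
open Real intervalIntegral Set

private lemma ricci_cont {b c : ℝ} (hc : 0 < c) :
    Continuous fun τ : ℝ => Real.sqrt (((1 - b) * τ ^ 2 + c) / (τ ^ 2 + c)) := by
  apply Continuous.sqrt
  exact Continuous.div (by fun_prop) (by fun_prop) (fun τ => by positivity)

private lemma ricci_cont2 {s c : ℝ} (hc : 0 < c) :
    Continuous fun τ : ℝ => s + (1 - s) * (c / (τ ^ 2 + c)) := by
  apply Continuous.add continuous_const
  apply Continuous.mul continuous_const
  exact Continuous.div continuous_const (by fun_prop) (fun τ => by positivity)

private lemma ricci_upper {b ρ : ℝ} (hb0 : 0 ≤ b) (hρ0 : 0 < ρ) (hρ1 : ρ < 1) :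
    (∫ τ in (0:ℝ)..ρ, Real.sqrt (((1 - b) * τ ^ 2 + ρ * (1 - ρ)) / (τ ^ 2 + ρ * (1 - ρ)))) ≤ ρ := by
  have hc : 0 < ρ * (1 - ρ) := by nlinarith
  calc (∫ τ in (0:ℝ)..ρ, Real.sqrt (((1 - b) * τ ^ 2 + ρ * (1 - ρ)) / (τ ^ 2 + ρ * (1 - ρ))))
      ≤ ∫ _τ in (0:ℝ)..ρ, (1:ℝ) := by
        apply integral_mono_on hρ0.le ((ricci_cont hc).intervalIntegrable 0 ρ)
          (intervalIntegrable_const)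
        intro τ _
        rw [Real.sqrt_le_one, div_le_one (by positivity)]
        nlinarith
    _ = ρ := by simp

private lemma ricci_nonneg {b ρ : ℝ} (hρ0 : 0 ≤ ρ) :
    0 ≤ ∫ τ in (0:ℝ)..ρ, Real.sqrt (((1 - b) * τ ^ 2 + ρ * (1 - ρ)) / (τ ^ 2 + ρ * (1 - ρ))) := by
  apply intervalIntegral.integral_nonneg hρ0
  intro τ _
  positivity

private lemma ricci_lower {b ρ : ℝ} (hb0 : 0 < b) (hb1 : b ≤ 1) (hρ0 : 0 < ρ) (hρ1 : ρ < 1) :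
    Real.sqrt (1 - b) * ρ + (1 - Real.sqrt (1 - b)) *
        (Real.sqrt (ρ * (1 - ρ)) * Real.arctan (ρ / Real.sqrt (ρ * (1 - ρ))))
      ≤ ∫ τ in (0:ℝ)..ρ, Real.sqrt (((1 - b) * τ ^ 2 + ρ * (1 - ρ)) / (τ ^ 2 + ρ * (1 - ρ))) := by
  have hc : 0 < ρ * (1 - ρ) := by nlinarith
  set s : ℝ := Real.sqrt (1 - b) with hs
  set c : ℝ := ρ * (1 - ρ) with hcdef
  have hs0 : 0 ≤ s := Real.sqrt_nonneg _
  have hs2 : s ^ 2 = 1 - b := Real.sq_sqrt (by linarith)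
  have hs1 : s ≤ 1 := by
    rw [show (1:ℝ) = Real.sqrt 1 by simp]
    exact Real.sqrt_le_sqrt (by linarith)
  have hsc : 0 < Real.sqrt c := Real.sqrt_pos.mpr hc
  have hsc2 : Real.sqrt c ^ 2 = c := Real.sq_sqrt hc.le
  -- step 1 : the integral of the minorant equals the LHS
  have hkey : ∀ τ : ℝ, c / (τ ^ 2 + c) = 1 / (1 + (τ / Real.sqrt c) ^ 2) := by
    intro τ
    rw [div_pow, hsc2]
    rw [div_eq_div_iff (by positivity) (by positivity)]
    field_simp
    ring
  have hint2 : (∫ τ in (0:ℝ)..ρ, c / (τ ^ 2 + c))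
      = Real.sqrt c * Real.arctan (ρ / Real.sqrt c) := by
    calc (∫ τ in (0:ℝ)..ρ, c / (τ ^ 2 + c))
        = ∫ τ in (0:ℝ)..ρ, (fun u : ℝ => 1 / (1 + u ^ 2)) (τ / Real.sqrt c) := by
          congr 1; ext τ; exact hkey τ
      _ = Real.sqrt c • ∫ u in (0:ℝ)/Real.sqrt c..ρ/Real.sqrt c, 1 / (1 + u ^ 2) :=
          intervalIntegral.integral_comp_div (fun u : ℝ => 1 / (1 + u ^ 2)) hsc.ne'
      _ = Real.sqrt c * Real.arctan (ρ / Real.sqrt c) := by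
          rw [integral_one_div_one_add_sq]
          simp [smul_eq_mul]
  have hint1 : (∫ τ in (0:ℝ)..ρ, (s + (1 - s) * (c / (τ ^ 2 + c))))
      = s * ρ + (1 - s) * (Real.sqrt c * Real.arctan (ρ / Real.sqrt c)) := by
    have hcont3 : Continuous fun τ : ℝ => (1 - s) * (c / (τ ^ 2 + c)) := by
      apply Continuous.mul continuous_const
      exact Continuous.div continuous_const (by fun_prop) (fun τ => by positivity)
    rw [intervalIntegral.integral_add (intervalIntegrable_const)
      (hcont3.intervalIntegrable 0 ρ),
      intervalIntegral.integral_const_mul, hint2]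
    simp [mul_comm]
  rw [← hint1]
  apply intervalIntegral.integral_mono_on hρ0.le
    ((ricci_cont2 hc).intervalIntegrable 0 ρ) ((ricci_cont hc).intervalIntegrable 0 ρ)
  intro τ _
  have hd : 0 < τ ^ 2 + c := by positivity
  have hq0 : 0 ≤ c / (τ ^ 2 + c) := by positivity
  have hq1 : c / (τ ^ 2 + c) ≤ 1 := by
    rw [div_le_one hd]; nlinarith
  have hrw : ((1 - b) * τ ^ 2 + c) / (τ ^ 2 + c) = (1 - b) + b * (c / (τ ^ 2 + c)) := by
    field_simp
    ring
  rw [hrw]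
  set q : ℝ := c / (τ ^ 2 + c) with hqdef
  apply Real.le_sqrt_of_sq_le
  nlinarith [mul_nonneg (mul_nonneg (sq_nonneg (1 - s)) hq0) (by linarith : (0:ℝ) ≤ 1 - q)]


private lemma ricci_case2 (s ρ R A : ℝ) (hs0 : 0 < s) (hs1 : s < 1)
    (hρ : ρ = 1 - (s * (1 - s))^2 / 16)
    (hR : 0.99 * (s * (1 - s) / 4) ≤ R) (hR0 : 0 ≤ R)
    (hA : 3/4 ≤ A) :
    1 - (1 - s^2) * ρ ≤ (s * ρ + (1 - s) * (R * A))^2 := by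
  have hss0 : 0 < s * (1 - s) := mul_pos hs0 (by linarith)
  have hu1 : s * (1 - s) ≤ 1/4 := by nlinarith [sq_nonneg (s - 1/2)]
  set ε : ℝ := (s * (1 - s))^2 / 16 with hεdef
  have hε0 : 0 < ε := by rw [hεdef]; positivity
  have hε1 : ε ≤ 1/256 := by rw [hεdef]; nlinarith [hu1, hss0]
  have hρl : 255/256 ≤ ρ := by rw [hρ]; linarith
  have hA0 : (0:ℝ) ≤ A := by linarith
  have h1 : (0.99 * (s * (1 - s) / 4)) * (3/4) ≤ R * A :=
    mul_le_mul hR hA (by norm_num) hR0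
  have hK : (1 - s) * ((0.99 * (s * (1 - s) / 4)) * (3/4)) ≤ (1 - s) * (R * A) :=
    mul_le_mul_of_nonneg_left h1 (by linarith)
  have hK0 : (0:ℝ) ≤ (0.99 * (s * (1 - s) / 4)) * (3/4) := by linarith [hss0]
  have hL0' : 0 ≤ s * ρ + (1 - s) * ((0.99 * (s * (1 - s) / 4)) * (3/4)) := by
    have t1 : (0:ℝ) ≤ s * ρ := mul_nonneg hs0.le (by linarith)
    have t2 : (0:ℝ) ≤ (1 - s) * ((0.99 * (s * (1 - s) / 4)) * (3/4)) :=
      mul_nonneg (by linarith) hK0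
    linarith
  have hpoly : 1 - (1 - s^2) * ρ ≤ (s * ρ + (1 - s) * ((0.99 * (s * (1 - s) / 4)) * (3/4)))^2 := by
    have hε16 : s^2 * (1 - s)^2 = 16 * ε := by rw [hεdef]; ring
    have hinner : 0 ≤ 4.94 - 5.94 * ε - s^2 * (1 - ε) := by
      have t0 : (0:ℝ) ≤ s^2 * ε := mul_nonneg (sq_nonneg s) hε0.le
      have t1 : s^2 ≤ 1 := by nlinarith
      linarith
    have t1 := mul_nonneg hε0.le hinner
    have t2 : (1 - ε) * (s^2 * (1 - s)^2) = (1 - ε) * (16 * ε) := by rw [hε16]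
    have t3 := sq_nonneg ((1 - s) * ((0.99 * (s * (1 - s) / 4)) * (3/4)))
    have hρ' : ρ = 1 - ε := by rw [hρ, hεdef]
    rw [hρ']
    nlinarith [t1, t2, t3]
  calc 1 - (1 - s^2) * ρ
      ≤ (s * ρ + (1 - s) * ((0.99 * (s * (1 - s) / 4)) * (3/4)))^2 := hpoly
    _ ≤ (s * ρ + (1 - s) * (R * A))^2 := by
        apply pow_le_pow_left₀ hL0' (by linarith) 2

private lemma ricci_endpoint (b : ℝ) (hb0 : 0 < b) (hb1 : b ≤ 1) :
    ∃ ρ₂ : ℝ, 3/4 ≤ ρ₂ ∧ ρ₂ < 1 ∧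
      1 - b * ρ₂ ≤ (Real.sqrt (1 - b) * ρ₂ + (1 - Real.sqrt (1 - b)) *
        (Real.sqrt (ρ₂ * (1 - ρ₂)) * Real.arctan (ρ₂ / Real.sqrt (ρ₂ * (1 - ρ₂))))) ^ 2 := by
  rcases eq_or_lt_of_le hb1 with hb | hb
  · -- b = 1
    subst hb
    refine ⟨99/100, by norm_num, by norm_num, ?_⟩
    have h0 : Real.sqrt (1 - 1) = 0 := by norm_num
    rw [h0]
    have hc : ((99:ℝ)/100) * (1 - 99/100) = 99/10000 := by norm_num
    rw [hc]
    have hsc2 : Real.sqrt (99/10000) ^ 2 = 99/10000 := Real.sq_sqrt (by norm_num)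
    have hsc0 : 0 < Real.sqrt (99/10000) := Real.sqrt_pos.mpr (by norm_num)
    have hscle : Real.sqrt (99/10000) ≤ 1/10 := by
      rw [show (1:ℝ)/10 = Real.sqrt ((1/10)^2) by rw [Real.sqrt_sq]; norm_num]
      exact Real.sqrt_le_sqrt (by norm_num)
    have harg : Real.sqrt 3 ≤ (99/100) / Real.sqrt (99/10000) := by
      have h3 : Real.sqrt 3 ≤ 2 := by
        rw [show (2:ℝ) = Real.sqrt (2^2) by rw [Real.sqrt_sq]; norm_num]
        exact Real.sqrt_le_sqrt (by norm_num)
      have : (2:ℝ) ≤ (99/100) / Real.sqrt (99/10000) := by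
        rw [le_div_iff₀ hsc0]
        nlinarith
      linarith
    have hA : Real.pi/3 ≤ Real.arctan ((99/100) / Real.sqrt (99/10000)) := by
      have htan : Real.arctan (Real.sqrt 3) = Real.pi/3 := by
        rw [← Real.tan_pi_div_three]
        exact Real.arctan_tan (by nlinarith [Real.pi_pos]) (by nlinarith [Real.pi_pos])
      rw [← htan]
      exact Real.arctan_strictMono.monotone harg
    have hApos : 0 ≤ Real.arctan ((99/100) / Real.sqrt (99/10000)) := by
      nlinarith [Real.pi_pos]
    have hpi : (3.14:ℝ) < Real.pi := Real.pi_gt_d2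
    calc 1 - 1 * (99/100 : ℝ) = 1/100 := by norm_num
      _ ≤ (99/10000) * (Real.pi/3)^2 := by nlinarith
      _ = Real.sqrt (99/10000)^2 * (Real.pi/3)^2 := by rw [hsc2]
      _ ≤ Real.sqrt (99/10000)^2 * Real.arctan ((99/100) / Real.sqrt (99/10000))^2 := by
          apply mul_le_mul_of_nonneg_left _ (sq_nonneg _)
          apply pow_le_pow_left₀ (by positivity) hA
      _ = (0 * (99/100) + (1 - 0) *
          (Real.sqrt (99/10000) * Real.arctan ((99/100) / Real.sqrt (99/10000)))) ^ 2 := by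
          ring
  · -- b < 1
    set s : ℝ := Real.sqrt (1 - b) with hsdef
    have hs0 : 0 < s := Real.sqrt_pos.mpr (by linarith)
    have hs2 : s ^ 2 = 1 - b := Real.sq_sqrt (by linarith)
    have hs1 : s < 1 := by nlinarith [Real.sqrt_nonneg (1 - b)]
    set ε : ℝ := (s * (1 - s))^2 / 16 with hεdef
    have hu1 : s * (1 - s) ≤ 1/4 := by nlinarith [sq_nonneg (s - 1/2)]
    have hss0 : 0 < s * (1 - s) := mul_pos hs0 (by linarith)
    have hε0 : 0 < ε := by rw [hεdef]; positivity
    have hε1 : ε ≤ 1/256 := by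
      rw [hεdef]
      nlinarith [hu1, hss0]
    refine ⟨1 - ε, by linarith, by linarith, ?_⟩
    set ρ : ℝ := 1 - ε with hρdef
    have hρl : 255/256 ≤ ρ := by rw [hρdef]; linarith
    have hρu : ρ < 1 := by rw [hρdef]; linarith
    have hc : 0 < ρ * (1 - ρ) := by nlinarith
    set c : ℝ := ρ * (1 - ρ) with hcdef
    have hcε : c = ρ * ε := by rw [hcdef, hρdef]; ring
    have hsqε : Real.sqrt ε = s * (1 - s) / 4 := by
      rw [hεdef, show (s * (1 - s))^2/16 = (s * (1 - s)/4)^2 by ring]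
      exact Real.sqrt_sq (by nlinarith)
    have hsqc : 0.99 * (s * (1 - s) / 4) ≤ Real.sqrt c := by
      have h1 : (0.9801 : ℝ) * ε ≤ c := by rw [hcε]; nlinarith
      have h2 : Real.sqrt (0.9801 * ε) ≤ Real.sqrt c := Real.sqrt_le_sqrt h1
      have h3 : Real.sqrt (0.9801 * ε) = 0.99 * Real.sqrt ε := by
        rw [Real.sqrt_mul (by norm_num), show (0.9801:ℝ) = 0.99^2 by norm_num,
          Real.sqrt_sq (by norm_num)]
      rw [h3, hsqε] at h2
      exact h2
    have hsc0 : 0 < Real.sqrt c := Real.sqrt_pos.mpr hc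
    have hA : Real.pi/4 ≤ Real.arctan (ρ / Real.sqrt c) := by
      have harg : (1:ℝ) ≤ ρ / Real.sqrt c := by
        rw [le_div_iff₀ hsc0]
        have : Real.sqrt c ≤ Real.sqrt (ρ^2) := Real.sqrt_le_sqrt (by rw [hcε]; nlinarith)
        rw [Real.sqrt_sq (by linarith)] at this
        linarith
      rw [← Real.arctan_one]
      exact Real.arctan_strictMono.monotone harg
    clear_value s ε ρ c
    have hpi : (3.14:ℝ) < Real.pi := Real.pi_gt_d2
    have h34 : (3:ℝ)/4 ≤ Real.arctan (ρ / Real.sqrt c) := by linarith [hA, hpi]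
    have hb' : b = 1 - s^2 := by rw [hs2]; ring
    have hρ' : ρ = 1 - (s * (1 - s))^2 / 16 := by rw [hρdef, hεdef]
    have := ricci_case2 s ρ (Real.sqrt c) (Real.arctan (ρ / Real.sqrt c))
      hs0 hs1 hρ' hsqc (Real.sqrt_nonneg c) h34
    rw [hb']
    exact this

/-- For every `b ∈ (0, 1]` there is `ρ ∈ (0, 1)` with
`(∫₀^ρ √(((1 - b)τ² + ρ(1 - ρ))/(τ² + ρ(1 - ρ))) dτ)² = 1 - b ρ`. -/
theorem exists_free_boundary_catenoidal_ricci
    (b : ℝ) (hb0 : 0 < b) (hb1 : b ≤ 1) :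
    ∃ ρ : ℝ, ρ ∈ Set.Ioo (0 : ℝ) 1 ∧
      (∫ τ in (0 : ℝ)..ρ,
          Real.sqrt (((1 - b) * τ ^ 2 + ρ * (1 - ρ)) / (τ ^ 2 + ρ * (1 - ρ)))) ^ 2
        = 1 - b * ρ := by
  obtain ⟨ρ₂, hρ₂a, hρ₂b, hρ₂c⟩ := ricci_endpoint b hb0 hb1
  set c₀ : ℝ := ρ₂ * (1 - ρ₂) with hc₀def
  have hc₀ : 0 < c₀ := by nlinarith
  set Φ : ℝ → ℝ := fun ρ => (∫ τ in (0:ℝ)..ρ,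
      Real.sqrt (((1 - b) * τ ^ 2 + max (ρ * (1 - ρ)) c₀) / (τ ^ 2 + max (ρ * (1 - ρ)) c₀))) ^ 2
      - (1 - b * ρ) with hΦdef
  have hmax : ∀ ρ : ℝ, ρ ∈ Set.Icc (1/4 : ℝ) ρ₂ → max (ρ * (1 - ρ)) c₀ = ρ * (1 - ρ) := by
    intro ρ hρ
    apply max_eq_left
    rw [hc₀def]
    nlinarith [hρ.1, hρ.2, mul_nonpos_of_nonpos_of_nonneg
      (by linarith [hρ.2] : ρ - ρ₂ ≤ 0) (by linarith [hρ.1] : (0:ℝ) ≤ ρ + ρ₂ - 1)]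
  have hHcont : Continuous (fun p : ℝ × ℝ =>
      Real.sqrt (((1 - b) * p.2 ^ 2 + max (p.1 * (1 - p.1)) c₀)
        / (p.2 ^ 2 + max (p.1 * (1 - p.1)) c₀))) := by
    apply Continuous.sqrt
    apply Continuous.div (by fun_prop) (by fun_prop)
    intro p
    have h1 : c₀ ≤ max (p.1 * (1 - p.1)) c₀ := le_max_right _ _
    nlinarith [sq_nonneg p.2]
  have hΦcont : Continuous Φ := by
    apply Continuous.sub _ (by fun_prop)
    apply Continuous.pow
    exact intervalIntegral.continuous_parametric_intervalIntegral_of_continuous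
      (f := fun ρ τ => Real.sqrt (((1 - b) * τ ^ 2 + max (ρ * (1 - ρ)) c₀)
        / (τ ^ 2 + max (ρ * (1 - ρ)) c₀))) hHcont continuous_id
  have hΦa : Φ (1/4) ≤ 0 := by
    have hm := hmax (1/4) ⟨le_refl _, by linarith⟩
    have hup := ricci_upper (b := b) (ρ := 1/4) hb0.le (by norm_num) (by norm_num)
    have hnn := ricci_nonneg (b := b) (ρ := (1/4:ℝ)) (by norm_num)
    simp only [hΦdef, hm]
    nlinarith
  have hΦb : 0 ≤ Φ ρ₂ := by
    have hm := hmax ρ₂ ⟨by linarith, le_refl _⟩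
    have hlow := ricci_lower (b := b) (ρ := ρ₂) hb0 hb1 (by linarith) hρ₂b
    have hL0 : 0 ≤ Real.sqrt (1 - b) * ρ₂ + (1 - Real.sqrt (1 - b)) *
        (Real.sqrt (ρ₂ * (1 - ρ₂)) * Real.arctan (ρ₂ / Real.sqrt (ρ₂ * (1 - ρ₂)))) := by
      have hs1 : Real.sqrt (1 - b) ≤ 1 := Real.sqrt_le_one.mpr (by linarith)
      have hA0 : 0 ≤ Real.arctan (ρ₂ / Real.sqrt (ρ₂ * (1 - ρ₂))) := by
        rw [← Real.arctan_zero]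
        apply Real.arctan_strictMono.monotone
        positivity
      have h1 := Real.sqrt_nonneg (1 - b)
      have h2 := Real.sqrt_nonneg (ρ₂ * (1 - ρ₂))
      apply add_nonneg (mul_nonneg h1 (by linarith))
      exact mul_nonneg (by linarith) (mul_nonneg h2 hA0)
    have hsq : (Real.sqrt (1 - b) * ρ₂ + (1 - Real.sqrt (1 - b)) *
        (Real.sqrt (ρ₂ * (1 - ρ₂)) * Real.arctan (ρ₂ / Real.sqrt (ρ₂ * (1 - ρ₂))))) ^ 2
        ≤ (∫ τ in (0:ℝ)..ρ₂,
          Real.sqrt (((1 - b) * τ ^ 2 + ρ₂ * (1 - ρ₂)) / (τ ^ 2 + ρ₂ * (1 - ρ₂)))) ^ 2 :=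
      pow_le_pow_left₀ hL0 hlow 2
    simp only [hΦdef, hm]
    linarith
  have hsub : Set.Icc (Φ (1/4)) (Φ ρ₂) ⊆ Φ '' Set.Icc (1/4) ρ₂ :=
    intermediate_value_Icc (by linarith) hΦcont.continuousOn
  obtain ⟨ρ, hρmem, hρval⟩ := hsub ⟨hΦa, hΦb⟩
  refine ⟨ρ, ⟨by linarith [hρmem.1], by linarith [hρmem.2]⟩, ?_⟩
  have hm := hmax ρ hρmem
  simp only [hΦdef, hm] at hρval
  linarith
end

section
/- There exists a unique ρ ∈ (0, 1) satisfying (1/√ρ) · sinh(1/√ρ) = 1/√(1 - ρ). -/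
noncomputable def ccFun : ℝ → ℝ :=
  fun ρ => (1 / Real.sqrt ρ) * Real.sinh (1 / Real.sqrt ρ) - 1 / Real.sqrt (1 - ρ)

lemma ccFun_strictAntiOn : StrictAntiOn ccFun (Set.Ioo (0:ℝ) 1) := by
  intro a ha b hb hab
  obtain ⟨ha0, ha1⟩ := ha
  obtain ⟨hb0, hb1⟩ := hb
  have hsa : 0 < Real.sqrt a := Real.sqrt_pos.mpr ha0
  have hsb : 0 < Real.sqrt b := Real.sqrt_pos.mpr hb0
  have hss : Real.sqrt a < Real.sqrt b := Real.sqrt_lt_sqrt ha0.le hab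
  set x := 1 / Real.sqrt b with hx
  set y := 1 / Real.sqrt a with hy
  have hx0 : 0 < x := by positivity
  have hxy : x < y := by
    apply one_div_lt_one_div_of_lt hsa hss
  have hsinh : Real.sinh x < Real.sinh y := Real.sinh_lt_sinh.mpr hxy
  have hsinhx : 0 < Real.sinh x := Real.sinh_pos_iff.mpr hx0
  have h1 : x * Real.sinh x < y * Real.sinh y := by nlinarith
  -- second part
  have h1a : 0 < 1 - a := by linarith
  have h1b : 0 < 1 - b := by linarith
  have hs1a : 0 < Real.sqrt (1 - a) := Real.sqrt_pos.mpr h1a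
  have hs1b : 0 < Real.sqrt (1 - b) := Real.sqrt_pos.mpr h1b
  have hss2 : Real.sqrt (1 - b) < Real.sqrt (1 - a) :=
    Real.sqrt_lt_sqrt h1b.le (by linarith)
  have h2 : 1 / Real.sqrt (1 - a) < 1 / Real.sqrt (1 - b) :=
    one_div_lt_one_div_of_lt hs1b hss2
  simp only [ccFun]
  rw [← hx, ← hy]
  linarith

lemma ccFun_half_pos : 0 < ccFun (1/2) := by
  have h : (1:ℝ) - 1/2 = 1/2 := by norm_num
  have hs : 0 < Real.sqrt (1/2) := Real.sqrt_pos.mpr (by norm_num)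
  have hlt1 : Real.sqrt (1/2) < 1 := by
    rw [show (1:ℝ) = Real.sqrt 1 by simp]
    exact Real.sqrt_lt_sqrt (by norm_num) (by norm_num)
  have h1s : 1 < 1 / Real.sqrt (1/2) := by rw [lt_div_iff₀ hs]; linarith
  have hsinh : 1 / Real.sqrt (1/2) < Real.sinh (1 / Real.sqrt (1/2)) :=
    Real.self_lt_sinh_iff.mpr (by positivity)
  have : 1 / Real.sqrt (1/2) < (1 / Real.sqrt (1/2)) * Real.sinh (1 / Real.sqrt (1/2)) := by
    nlinarith
  simp only [ccFun, h]
  linarith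

lemma ccFun_nine_tenths_neg : ccFun (9/10) < 0 := by
  have h : (1:ℝ) - 9/10 = 1/10 := by norm_num
  have h9 : Real.sqrt (9/10) = 3 * Real.sqrt (1/10) := by
    rw [show (9/10:ℝ) = 3^2 * (1/10) by norm_num, Real.sqrt_mul (by positivity),
      Real.sqrt_sq (by norm_num)]
  have hs : 0 < Real.sqrt (1/10) := Real.sqrt_pos.mpr (by norm_num)
  set t := 1 / Real.sqrt (9/10) with ht
  have ht0 : 0 < t := by rw [ht]; positivity
  -- t ≤ 11/10 since t^2 = 10/9 ≤ 121/100
  have htsq : t^2 = 10/9 := by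
    rw [ht, div_pow, one_pow, Real.sq_sqrt (by norm_num)]
    norm_num
  have htle : t ≤ 11/10 := by nlinarith
  -- sinh t < 3
  have hsinh3 : Real.sinh t < 3 := by
    have h1 : Real.sinh t ≤ Real.sinh (11/10) := Real.sinh_le_sinh.mpr htle
    have h2 : Real.sinh (11/10) < Real.exp (11/10) / 2 := by
      rw [Real.sinh_eq]
      have := Real.exp_pos (-(11/10:ℝ))
      linarith
    have hexp : Real.exp (11/10) < 6 := by
      have hadd : Real.exp (11/10 : ℝ) = Real.exp 1 * Real.exp (1/10) := by
        rw [← Real.exp_add]; norm_num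
      have h10 : Real.exp (1/10 : ℝ) ≤ 10/9 := by
        have hneg : (9/10 : ℝ) ≤ Real.exp (-(1/10)) := by
          have := Real.add_one_le_exp (-(1/10 : ℝ))
          linarith
        have hpos : 0 < Real.exp (-(1/10:ℝ)) := Real.exp_pos _
        have hmul : Real.exp (1/10:ℝ) * Real.exp (-(1/10)) = 1 := by
          rw [← Real.exp_add]; norm_num
        nlinarith [Real.exp_pos (1/10:ℝ)]
      have he1 : Real.exp 1 < 2.7182818286 := Real.exp_one_lt_d9
      have hep : 0 < Real.exp (1/10 : ℝ) := Real.exp_pos _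
      rw [hadd]
      nlinarith [Real.exp_pos (1:ℝ)]
    linarith
  -- 1/√(1/10) = 3 t
  have hu : 1 / Real.sqrt (1/10) = 3 * t := by
    rw [ht, h9]
    field_simp
  simp only [ccFun, h, ← ht, hu]
  nlinarith

lemma ccFun_continuousOn : ContinuousOn ccFun (Set.Icc (1/2 : ℝ) (9/10)) := by
  apply ContinuousOn.sub
  · have h1 : ContinuousOn (fun ρ => 1 / Real.sqrt ρ) (Set.Icc (1/2 : ℝ) (9/10)) := by
      apply continuousOn_const.div Real.continuous_sqrt.continuousOn
      intro x hx
      exact ne_of_gt (Real.sqrt_pos.mpr (by linarith [hx.1]))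
    exact h1.mul (Real.continuous_sinh.comp_continuousOn h1)
  · apply continuousOn_const.div
    · exact (Real.continuous_sqrt.comp (continuous_const.sub continuous_id)).continuousOn
    · intro x hx
      exact ne_of_gt (Real.sqrt_pos.mpr (by simp; linarith [hx.2]))

/-- There is a unique `ρ ∈ (0, 1)` with
`(1/√ρ) sinh(1/√ρ) = 1/√(1 - ρ)` (the parameter of the critical catenoid). -/
theorem critical_catenoid_parameter_exists_unique :
    ∃! ρ : ℝ, ρ ∈ Set.Ioo (0 : ℝ) 1 ∧
      (1 / Real.sqrt ρ) * Real.sinh (1 / Real.sqrt ρ) = 1 / Real.sqrt (1 - ρ) := by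
  have hsub : Set.Icc (1/2 : ℝ) (9/10) ⊆ Set.Ioo (0:ℝ) 1 := by
    intro x hx
    exact ⟨by linarith [hx.1], by linarith [hx.2]⟩
  have hivt := intermediate_value_Icc' (by norm_num : (1/2:ℝ) ≤ 9/10) ccFun_continuousOn
  have h0 : (0:ℝ) ∈ Set.Icc (ccFun (9/10)) (ccFun (1/2)) :=
    ⟨ccFun_nine_tenths_neg.le, ccFun_half_pos.le⟩
  obtain ⟨c, hc, hfc⟩ := hivt h0
  refine ⟨c, ⟨hsub hc, by have := hfc; simp only [ccFun] at this; linarith⟩, ?_⟩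
  rintro y ⟨hy, hyeq⟩
  have hfy : ccFun y = 0 := by simp only [ccFun]; linarith
  exact ccFun_strictAntiOn.injOn hy (hsub hc) (by rw [hfy, hfc])
end
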